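/- arXiv:2405.20000 — 5 statements merged into one kernel-verified Lean document; each statement's English description precedes it below -/
import Mathlib

section
/- Suppose there is a largest integer l with 2 ≤ l ≤ m such that the linear system Φ_j η = Y_j for j = 1,…,l admits a solution η₀ ∈ ℝ^p, and suppose l < m. Suppose moreover that the stacked matrix Φ_{[l+1]} (obtained by stacking the blocks Φ_1,…,Φ_{l+1}) contains an invertible p×p submatrix. For each r > 0 let ω_r ∈ ℝ^p be a minimizer of the function ω ↦ ‖Y − Φ(r)ω‖₂ over ℝ^p. Then the family {r²ω_r : r > 0} is bounded near 0, i.e. there exist constants C > 0 and r₀ > 0 such that ‖r²ω_r‖₂ ≤ C for all 0 < r < r₀. -/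
open Finset

noncomputable section

/-- The Euclidean (ℓ²) norm of a finitely-indexed real vector. -/
def l2norm {ι : Type*} [Fintype ι] (v : ι → ℝ) : ℝ :=
  Real.sqrt (∑ i, v i ^ 2)

/-- Index type for the monomials `x^a y^b` in two variables with `1 ≤ a + b ≤ m`. -/
abbrev MonIdx (m : ℕ) :=
  {ab : Fin (m + 1) × Fin (m + 1) // 1 ≤ (ab.1 : ℕ) + (ab.2 : ℕ) ∧ (ab.1 : ℕ) + (ab.2 : ℕ) ≤ m}

/-- The total degree of a monomial index. -/
def monDeg {m : ℕ} (i : MonIdx m) : ℕ := (i.1.1 : ℕ) + (i.1.2 : ℕ)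

/-- The monomial `x^a y^b` as a function on `ℝ²`. -/
def monomial {m : ℕ} (i : MonIdx m) (v : ℝ × ℝ) : ℝ :=
  v.1 ^ ((i.1.1 : ℕ)) * v.2 ^ ((i.1.2 : ℕ))

/-- The vector `Y`, whose `i`-th entry is `Δφᵢ(0,0)`: it equals `2` exactly when `φᵢ` is
`x²` or `y²`, and `0` otherwise. -/
def Yvec {m : ℕ} (i : MonIdx m) : ℝ :=
  if ((i.1.1 : ℕ) = 2 ∧ (i.1.2 : ℕ) = 0) ∨ ((i.1.1 : ℕ) = 0 ∧ (i.1.2 : ℕ) = 2) then 2 else 0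

/-- The matrix `Φ(r)` with entries `φᵢ(r xₖ)`. -/
def PhiMat {m p : ℕ} (x : Fin p → ℝ × ℝ) (r : ℝ) : Matrix (MonIdx m) (Fin p) ℝ :=
  Matrix.of fun i k => monomial i (r • x k)

/- ### Auxiliary lemmas -/

lemma mulVec_PhiMat {m p : ℕ} (x : Fin p → ℝ × ℝ) (r : ℝ) (w : Fin p → ℝ) (i : MonIdx m) :
    (PhiMat x r).mulVec w i = r ^ monDeg i * ((PhiMat x 1).mulVec w i) := by
  simp only [Matrix.mulVec, dotProduct, PhiMat, Matrix.of_apply, monomial, monDeg,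
    Prod.smul_fst, Prod.smul_snd, smul_eq_mul, Finset.mul_sum]
  refine Finset.sum_congr rfl fun k _ => ?_
  rw [mul_pow, mul_pow, mul_pow, mul_pow, pow_add]
  ring

lemma Yvec_eq_zero {m : ℕ} {i : MonIdx m} (h : monDeg i ≠ 2) : Yvec i = 0 := by
  rw [Yvec, if_neg]
  rintro (⟨h1, h2⟩ | ⟨h1, h2⟩) <;> simp [monDeg, h1, h2] at h

lemma abs_Yvec_le {m : ℕ} (i : MonIdx m) : |Yvec i| ≤ 2 := by
  rw [Yvec]; split <;> norm_num

lemma abs_le_l2norm {ι : Type*} [Fintype ι] (v : ι → ℝ) (i : ι) : |v i| ≤ l2norm v := by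
  rw [l2norm, ← Real.sqrt_sq_eq_abs]
  exact Real.sqrt_le_sqrt (Finset.single_le_sum (fun j _ => sq_nonneg (v j)) (Finset.mem_univ i))

lemma l2norm_le {ι : Type*} [Fintype ι] {v : ι → ℝ} {c : ℝ} (hc : 0 ≤ c)
    (h : ∀ i, |v i| ≤ c) : l2norm v ≤ Real.sqrt (Fintype.card ι) * c := by
  have h1 : ∑ i, v i ^ 2 ≤ (Fintype.card ι : ℝ) * c ^ 2 := by
    calc ∑ i, v i ^ 2 ≤ ∑ _i : ι, c ^ 2 :=
          Finset.sum_le_sum fun i _ => by rw [← sq_abs]; exact pow_le_pow_left₀ (abs_nonneg _) (h i) 2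
      _ = (Fintype.card ι : ℝ) * c ^ 2 := by
          simp [Finset.sum_const, Finset.card_univ, nsmul_eq_mul]
  calc l2norm v ≤ Real.sqrt ((Fintype.card ι : ℝ) * c ^ 2) := Real.sqrt_le_sqrt h1
    _ = Real.sqrt (Fintype.card ι) * c := by
        rw [Real.sqrt_mul (by positivity), Real.sqrt_sq hc]

/-- Lemma 3.2 part 1): if `l` (with `2 ≤ l < m`) is the largest integer such that the block
system `Φ_j η = Y_j, j = 1,…,l` is solvable, and the stacked matrix `Φ_{[l+1]}` contains an
invertible `p × p` submatrix, then the family `r² ω_r` of rescaled least-squares minimizers is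
bounded near `r = 0`. -/
theorem stmt0 {p m : ℕ} (hm : 2 ≤ m) (x : Fin p → ℝ × ℝ) (l : ℕ)
    (hl2 : 2 ≤ l) (hlm : l < m)
    -- the system up to degree `l` admits a solution `η₀`
    (η₀ : Fin p → ℝ)
    (hsol : ∀ i : MonIdx m, monDeg i ≤ l → (PhiMat x 1).mulVec η₀ i = Yvec i)
    -- `l` is the largest such integer: the system up to degree `l+1` has no solution
    (hmax : ¬ ∃ η : Fin p → ℝ,
      ∀ i : MonIdx m, monDeg i ≤ l + 1 → (PhiMat x 1).mulVec η i = Yvec i)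
    -- `Φ_{[l+1]}` contains an invertible `p × p` submatrix
    (hsub : ∃ rows : Fin p → MonIdx m, (∀ k, monDeg (rows k) ≤ l + 1) ∧
      IsUnit ((PhiMat x 1).submatrix rows id))
    -- for each `r > 0`, `ω r` minimizes `ω ↦ ‖Y − Φ(r) ω‖₂`
    (ω : ℝ → Fin p → ℝ)
    (hmin : ∀ r : ℝ, 0 < r → ∀ w : Fin p → ℝ,
      l2norm (fun i : MonIdx m => Yvec i - (PhiMat x r).mulVec (ω r) i) ≤
        l2norm (fun i : MonIdx m => Yvec i - (PhiMat x r).mulVec w i)) :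
    ∃ C > (0 : ℝ), ∃ r₀ > (0 : ℝ), ∀ r : ℝ, 0 < r → r < r₀ →
      l2norm (r ^ 2 • ω r) ≤ C := by
  obtain ⟨rows, hrowdeg, hA⟩ := hsub
  obtain ⟨Φ, hΦ⟩ : ∃ Φ : Matrix (MonIdx m) (Fin p) ℝ, Φ = PhiMat x 1 := ⟨_, rfl⟩
  obtain ⟨A, hAdef⟩ : ∃ A : Matrix (Fin p) (Fin p) ℝ, A = Φ.submatrix rows id := ⟨_, rfl⟩
  -- constants
  obtain ⟨M, hMdef⟩ : ∃ M : ℝ, M = ∑ i : MonIdx m, |Φ.mulVec η₀ i| := ⟨_, rfl⟩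
  have hM0 : 0 ≤ M := by
    rw [hMdef]; exact Finset.sum_nonneg fun i _ => abs_nonneg _
  have hMi : ∀ i : MonIdx m, |Φ.mulVec η₀ i| ≤ M := fun i => by
    rw [hMdef]
    exact Finset.single_le_sum (f := fun j : MonIdx m => |Φ.mulVec η₀ j|)
      (fun j _ => abs_nonneg _) (Finset.mem_univ i)
  obtain ⟨K, hKdef⟩ : ∃ K : ℝ, K = Real.sqrt (Fintype.card (MonIdx m)) * M := ⟨_, rfl⟩
  have hK0 : 0 ≤ K := by
    rw [hKdef]; exact mul_nonneg (Real.sqrt_nonneg _) hM0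
  have hdet : IsUnit A.det := (Matrix.isUnit_iff_isUnit_det A).mp (hAdef ▸ hΦ ▸ hA)
  obtain ⟨N, hNdef⟩ : ∃ N : ℝ, N = ∑ j : Fin p, ∑ k : Fin p, |A⁻¹ j k| := ⟨_, rfl⟩
  have hN0 : 0 ≤ N := by
    rw [hNdef]
    exact Finset.sum_nonneg fun j _ => Finset.sum_nonneg fun k _ => abs_nonneg _
  have hNj : ∀ j : Fin p, (∑ k : Fin p, |A⁻¹ j k|) ≤ N := fun j => by
    rw [hNdef]
    exact Finset.single_le_sum (f := fun j' : Fin p => ∑ k : Fin p, |A⁻¹ j' k|)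
      (fun j' _ => Finset.sum_nonneg fun k _ => abs_nonneg _) (Finset.mem_univ j)
  have hK2 : (0:ℝ) ≤ K + 2 := by linarith
  refine ⟨Real.sqrt (Fintype.card (Fin p)) * (N * (K + 2)) + 1, ?_, 1, one_pos, ?_⟩
  · have h0 : 0 ≤ Real.sqrt (Fintype.card (Fin p)) * (N * (K + 2)) :=
      mul_nonneg (Real.sqrt_nonneg _) (mul_nonneg hN0 hK2)
    linarith
  intro r hr hr1
  have hrne : r ≠ 0 := ne_of_gt hr
  have hrinv2 : (0:ℝ) < (r ^ 2)⁻¹ := inv_pos.mpr (pow_pos hr 2)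
  -- residual bound for the candidate vector `(r²)⁻¹ • η₀`
  have hMr : (0:ℝ) ≤ M * r ^ (l - 1) := mul_nonneg hM0 (pow_nonneg hr.le _)
  have hres_cand : ∀ i : MonIdx m,
      |Yvec i - (PhiMat x r).mulVec ((r ^ 2)⁻¹ • η₀) i| ≤ M * r ^ (l - 1) := by
    intro i
    have hrw : (PhiMat x r).mulVec ((r ^ 2)⁻¹ • η₀) i
        = (r ^ 2)⁻¹ * (r ^ monDeg i * Φ.mulVec η₀ i) := by
      rw [Matrix.mulVec_smul, Pi.smul_apply, smul_eq_mul, mulVec_PhiMat, hΦ]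
    by_cases hdi : monDeg i ≤ l
    · have hY : Φ.mulVec η₀ i = Yvec i := by rw [hΦ]; exact hsol i hdi
      by_cases hY0 : Yvec i = 0
      · rw [hrw, hY, hY0]
        simpa using hMr
      · have hd2 : monDeg i = 2 := by
          by_contra hne; exact hY0 (Yvec_eq_zero hne)
        rw [hrw, hY, hd2, inv_mul_cancel_left₀ (pow_ne_zero 2 hrne), sub_self, abs_zero]
        exact hMr
    · push_neg at hdi
      have hY0 : Yvec i = 0 := Yvec_eq_zero (by omega)
      have h2d : 2 ≤ monDeg i := by omega
      rw [hrw, hY0, zero_sub, abs_neg, abs_mul, abs_mul]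
      have hcoef : |(r ^ 2)⁻¹| * |r ^ monDeg i| = r ^ (monDeg i - 2) := by
        rw [abs_of_pos hrinv2, abs_of_pos (pow_pos hr _), pow_sub₀ r hrne h2d]
        ring
      rw [← mul_assoc, hcoef]
      calc r ^ (monDeg i - 2) * |Φ.mulVec η₀ i| ≤ r ^ (l - 1) * M := by
            apply mul_le_mul _ (hMi i) (abs_nonneg _) (pow_nonneg hr.le _)
            exact pow_le_pow_of_le_one hr.le hr1.le (by omega)
        _ = M * r ^ (l - 1) := mul_comm _ _
  -- coordinatewise residual bound for the minimizer
  have hres : ∀ i : MonIdx m,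
      |Yvec i - (PhiMat x r).mulVec (ω r) i| ≤ K * r ^ (l - 1) := by
    intro i
    calc |Yvec i - (PhiMat x r).mulVec (ω r) i|
        ≤ l2norm (fun i : MonIdx m => Yvec i - (PhiMat x r).mulVec (ω r) i) :=
          abs_le_l2norm (fun i : MonIdx m => Yvec i - (PhiMat x r).mulVec (ω r) i) i
      _ ≤ l2norm (fun i : MonIdx m => Yvec i - (PhiMat x r).mulVec ((r ^ 2)⁻¹ • η₀) i) :=
          hmin r hr _
      _ ≤ Real.sqrt (Fintype.card (MonIdx m)) * (M * r ^ (l - 1)) :=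
          l2norm_le hMr hres_cand
      _ = K * r ^ (l - 1) := by rw [hKdef]; ring
  obtain ⟨v, hvdef⟩ : ∃ v : Fin p → ℝ, v = r ^ 2 • ω r := ⟨_, rfl⟩
  -- entrywise bound on `A.mulVec v`
  have hAv : ∀ k : Fin p, |A.mulVec v k| ≤ K + 2 := by
    intro k
    have hd2 : monDeg (rows k) ≤ l + 1 := hrowdeg k
    have hres' : |Yvec (rows k) - r ^ monDeg (rows k) * Φ.mulVec (ω r) (rows k)|
        ≤ K * r ^ (l - 1) := by
      have h := hres (rows k)
      rwa [mulVec_PhiMat, ← hΦ] at h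
    set d : ℕ := monDeg (rows k) with hddef
    set t : ℝ := Φ.mulVec (ω r) (rows k) with htdef
    have hAvk : A.mulVec v k = r ^ 2 * t := by
      rw [hAdef, htdef, hvdef]
      simp only [Matrix.mulVec, dotProduct, Matrix.submatrix_apply, id_eq,
        Pi.smul_apply, smul_eq_mul, Finset.mul_sum]
      exact Finset.sum_congr rfl fun j _ => by ring
    have hrd : (0:ℝ) < r ^ d := pow_pos hr d
    have ht : |r ^ d * t| ≤ |Yvec (rows k)| + K * r ^ (l - 1) := by
      calc |r ^ d * t| = |Yvec (rows k) + (r ^ d * t - Yvec (rows k))| := by ring_nf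
        _ ≤ |Yvec (rows k)| + |r ^ d * t - Yvec (rows k)| := abs_add_le _ _
        _ = |Yvec (rows k)| + |Yvec (rows k) - r ^ d * t| := by rw [abs_sub_comm]
        _ ≤ |Yvec (rows k)| + K * r ^ (l - 1) := by linarith
    have habs : |A.mulVec v k| = r ^ 2 / r ^ d * |r ^ d * t| := by
      rw [hAvk, abs_mul, abs_mul, abs_of_pos (pow_pos hr 2), abs_of_pos hrd]
      field_simp
    rw [habs]
    have hq0 : (0:ℝ) ≤ r ^ 2 / r ^ d := div_nonneg (pow_nonneg hr.le _) (pow_nonneg hr.le _)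
    have hterm1 : r ^ 2 / r ^ d * |Yvec (rows k)| ≤ 2 := by
      by_cases hY : Yvec (rows k) = 0
      · rw [hY, abs_zero, mul_zero]; norm_num
      · have hde : d = 2 := by
          by_contra hne; exact hY (Yvec_eq_zero hne)
        rw [hde, div_self (pow_ne_zero 2 hrne), one_mul]
        exact abs_Yvec_le _
    have hterm2 : r ^ 2 / r ^ d * (K * r ^ (l - 1)) ≤ K := by
      have hpow : r ^ 2 / r ^ d * r ^ (l - 1) = r ^ (l + 1 - d) := by
        rw [pow_sub₀ r hrne hd2, div_eq_mul_inv]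
        rw [show l + 1 = 2 + (l - 1) by omega, pow_add]
        ring
      calc r ^ 2 / r ^ d * (K * r ^ (l - 1)) = K * (r ^ 2 / r ^ d * r ^ (l - 1)) := by ring
        _ = K * r ^ (l + 1 - d) := by rw [hpow]
        _ ≤ K * 1 := mul_le_mul_of_nonneg_left (pow_le_one₀ hr.le hr1.le) hK0
        _ = K := mul_one K
    calc r ^ 2 / r ^ d * |r ^ d * t|
        ≤ r ^ 2 / r ^ d * (|Yvec (rows k)| + K * r ^ (l - 1)) :=
          mul_le_mul_of_nonneg_left ht hq0
      _ = r ^ 2 / r ^ d * |Yvec (rows k)| + r ^ 2 / r ^ d * (K * r ^ (l - 1)) := by ring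
      _ ≤ 2 + K := by linarith
      _ = K + 2 := by ring
  -- invert the submatrix to bound `v` coordinatewise
  have hv : ∀ j : Fin p, |v j| ≤ N * (K + 2) := by
    intro j
    have h1 : A⁻¹.mulVec (A.mulVec v) = v := by
      rw [Matrix.mulVec_mulVec, Matrix.nonsing_inv_mul A hdet, Matrix.one_mulVec]
    have hvj : v j = ∑ k : Fin p, A⁻¹ j k * A.mulVec v k := by
      conv_lhs => rw [← h1]
      rfl
    calc |v j| = |∑ k : Fin p, A⁻¹ j k * A.mulVec v k| := by rw [hvj]
      _ ≤ ∑ k : Fin p, |A⁻¹ j k * A.mulVec v k| := Finset.abs_sum_le_sum_abs _ _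
      _ ≤ ∑ k : Fin p, |A⁻¹ j k| * (K + 2) := Finset.sum_le_sum fun k _ => by
          rw [abs_mul]; exact mul_le_mul_of_nonneg_left (hAv k) (abs_nonneg _)
      _ = (∑ k : Fin p, |A⁻¹ j k|) * (K + 2) := (Finset.sum_mul _ _ _).symm
      _ ≤ N * (K + 2) := mul_le_mul_of_nonneg_right (hNj j) hK2
  have hv' : ∀ j : Fin p, |(r ^ 2 • ω r) j| ≤ N * (K + 2) := by
    rw [← hvdef]; exact hv
  calc l2norm (r ^ 2 • ω r)
      ≤ Real.sqrt (Fintype.card (Fin p)) * (N * (K + 2)) :=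
        l2norm_le (mul_nonneg hN0 hK2) hv'
    _ ≤ Real.sqrt (Fintype.card (Fin p)) * (N * (K + 2)) + 1 := by linarith
end
end

section
/- Let 2 ≤ l < m and suppose η₀ ∈ ℝ^p satisfies Φ_j η₀ = Y_j for every j = 1,…,l. For r > 0 let Λ_r be the n×n diagonal matrix whose diagonal entry in a row corresponding to a degree-j monomial is r^{j−2}, and let η_r ∈ ℝ^p be any minimizer of η ↦ ‖Y − Λ_r Φ η‖₂ over ℝ^p. Then for every r > 0 and every i ∈ {1,…,l+1}: r^{2(i−2)} ‖Y_i − Φ_i η_r‖₂² ≤ Σ_{j=l+1}^{m} r^{2(j−2)} ‖Y_j − Φ_j η₀‖₂². -/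
open Finset

noncomputable section

/-!
Every entry of `Y` outside degree 2 vanishes, so the rows of `Y − Λ_r Φ η` of degree `j` are
exactly `r^(j−2)` times those of `Y − Φ η`. Hence `‖Y − Λ_r Φ η‖₂²` is the weighted sum over
`j` of `r^(2(j−2)) ‖Y_j − Φ_j η‖₂²`. One block of this sum for `η_r` is bounded by the whole sum,
which by minimality is at most the sum for `η₀`, in which the blocks of degree `≤ l` vanish.
-/

open scoped Matrix

lemma l2norm_le_l2norm_iff {ι : Type*} [Fintype ι] {u v : ι → ℝ} :
    l2norm u ≤ l2norm v ↔ ∑ i, u i ^ 2 ≤ ∑ i, v i ^ 2 :=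
  Real.sqrt_le_sqrt_iff (sum_nonneg fun _ _ => sq_nonneg _)

section Blocks

variable {m : ℕ}

/-- `‖Y_j − v_j‖₂²` in the notation of the paper. -/
def blockResidual (v : MonIdx m → ℝ) (j : ℕ) : ℝ :=
  ∑ row ∈ univ.filter (fun row : MonIdx m => monDeg row = j), (Yvec row - v row) ^ 2

lemma blockResidual_nonneg (v : MonIdx m → ℝ) (j : ℕ) : 0 ≤ blockResidual v j :=
  sum_nonneg fun _ _ => sq_nonneg _

lemma blockResidual_eq_zero {v : MonIdx m → ℝ} {j : ℕ}
    (hv : ∀ row : MonIdx m, monDeg row = j → v row = Yvec row) : blockResidual v j = 0 :=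
  sum_eq_zero fun row hrow => by rw [hv row (mem_filter.1 hrow).2, sub_self, sq, mul_zero]

lemma monDeg_mem_Icc (i : MonIdx m) : monDeg i ∈ Icc 1 m :=
  mem_Icc.2 i.2

lemma Yvec_eq_zero_of_monDeg_ne {i : MonIdx m} (h : monDeg i ≠ 2) : Yvec i = 0 := by
  unfold Yvec
  rw [if_neg]
  rintro (⟨h1, h2⟩ | ⟨h1, h2⟩) <;> exact h (by simp [monDeg, h1, h2])

lemma Yvec_sub_diagonal_mulVec (r : ℝ) (v : MonIdx m → ℝ) (i : MonIdx m) :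
    Yvec i - ((Matrix.diagonal fun j : MonIdx m => r ^ ((monDeg j : ℤ) - 2)) *ᵥ v) i =
      r ^ ((monDeg i : ℤ) - 2) * (Yvec i - v i) := by
  rw [Matrix.mulVec_diagonal]
  by_cases h : monDeg i = 2
  · simp [h]
  · rw [Yvec_eq_zero_of_monDeg_ne h]
    ring

lemma sum_eq_sum_Icc_blocks {M : Type*} [AddCommMonoid M] (f : MonIdx m → M) :
    ∑ row, f row =
      ∑ j ∈ Icc 1 m, ∑ row ∈ univ.filter (fun row : MonIdx m => monDeg row = j), f row :=
  (sum_fiberwise_of_maps_to (fun row _ => monDeg_mem_Icc row) f).symm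

lemma sum_sq_Yvec_sub_diagonal_mulVec (r : ℝ) (v : MonIdx m → ℝ) :
    ∑ i, (Yvec i - ((Matrix.diagonal fun j : MonIdx m => r ^ ((monDeg j : ℤ) - 2)) *ᵥ v) i) ^ 2 =
      ∑ j ∈ Icc 1 m, r ^ (2 * ((j : ℤ) - 2)) * blockResidual v j := by
  simp_rw [Yvec_sub_diagonal_mulVec, mul_pow]
  rw [sum_eq_sum_Icc_blocks]
  refine sum_congr rfl fun j _ => ?_
  rw [blockResidual, mul_sum]
  refine sum_congr rfl fun row hrow => ?_
  rw [(mem_filter.1 hrow).2, mul_comm 2, zpow_mul, zpow_two, sq]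

lemma sum_Icc_blockResidual_of_solves {l : ℕ} (w : ℕ → ℝ) {v : MonIdx m → ℝ}
    (hv : ∀ row : MonIdx m, monDeg row ≤ l → v row = Yvec row) :
    ∑ j ∈ Icc 1 m, w j * blockResidual v j = ∑ j ∈ Icc (l + 1) m, w j * blockResidual v j := by
  refine (sum_subset (Icc_subset_Icc_left (by omega)) fun j hj hj_high => ?_).symm
  have hjl : j ≤ l := by
    simp only [mem_Icc, not_and, not_le] at hj hj_high
    omega
  rw [blockResidual_eq_zero fun row hrow => hv row (hrow ▸ hjl), mul_zero]

end Blocks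

theorem stmt3_general {p m : ℕ} (x : Fin p → ℝ × ℝ) (l : ℕ)
    (hlm : l < m)
    (η₀ : Fin p → ℝ)
    (hsol : ∀ i : MonIdx m, monDeg i ≤ l → (PhiMat x 1).mulVec η₀ i = Yvec i)
    (r : ℝ)
    (ηr : Fin p → ℝ)
    (hmin : ∀ η : Fin p → ℝ,
      l2norm (fun i : MonIdx m => Yvec i -
          (Matrix.diagonal (fun j : MonIdx m => r ^ ((monDeg j : ℤ) - 2))).mulVec
            ((PhiMat x 1).mulVec ηr) i) ≤
        l2norm (fun i : MonIdx m => Yvec i -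
          (Matrix.diagonal (fun j : MonIdx m => r ^ ((monDeg j : ℤ) - 2))).mulVec
            ((PhiMat x 1).mulVec η) i)) :
    ∀ i : ℕ, 1 ≤ i → i ≤ l + 1 →
      r ^ (2 * ((i : ℤ) - 2)) *
          ∑ row ∈ Finset.univ.filter (fun row : MonIdx m => monDeg row = i),
            (Yvec row - (PhiMat x 1).mulVec ηr row) ^ 2 ≤
        ∑ j ∈ Finset.Icc (l + 1) m,
          r ^ (2 * ((j : ℤ) - 2)) *
            ∑ row ∈ Finset.univ.filter (fun row : MonIdx m => monDeg row = j),
              (Yvec row - (PhiMat x 1).mulVec η₀ row) ^ 2 := by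
  intro i hi1 hil
  have hweight : ∀ j : ℕ, 0 ≤ r ^ (2 * ((j : ℤ) - 2)) := fun j =>
    (even_two_mul _).zpow_nonneg r
  have hminimal := l2norm_le_l2norm_iff.1 (hmin η₀)
  rw [sum_sq_Yvec_sub_diagonal_mulVec, sum_sq_Yvec_sub_diagonal_mulVec] at hminimal
  calc r ^ (2 * ((i : ℤ) - 2)) * blockResidual (PhiMat x 1 *ᵥ ηr) i
      ≤ ∑ j ∈ Icc 1 m, r ^ (2 * ((j : ℤ) - 2)) * blockResidual (PhiMat x 1 *ᵥ ηr) j :=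
        single_le_sum (fun j _ => mul_nonneg (hweight j) (blockResidual_nonneg _ j))
          (mem_Icc.2 ⟨hi1, by omega⟩)
    _ ≤ ∑ j ∈ Icc 1 m, r ^ (2 * ((j : ℤ) - 2)) * blockResidual (PhiMat x 1 *ᵥ η₀) j :=
        hminimal
    _ = ∑ j ∈ Icc (l + 1) m, r ^ (2 * ((j : ℤ) - 2)) * blockResidual (PhiMat x 1 *ᵥ η₀) j :=
        sum_Icc_blockResidual_of_solves _ hsol

/-- The key inequality (Eq. (B.3)–(B.4)) in the proof of Lemma 3.2: if `η₀` solves the block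
system up to degree `l` (with `2 ≤ l < m`) and `η_r` minimizes `η ↦ ‖Y − Λ_r Φ η‖₂`, where
`Λ_r` is diagonal with entry `r^(j−2)` on rows of degree `j`, then for every `r > 0` and every
`i ∈ {1,…,l+1}`,
`r^{2(i−2)} ‖Y_i − Φ_i η_r‖₂² ≤ ∑_{j=l+1}^{m} r^{2(j−2)} ‖Y_j − Φ_j η₀‖₂²`. -/
theorem stmt3 {p m : ℕ} (hm : 2 ≤ m) (x : Fin p → ℝ × ℝ) (l : ℕ)
    (hl2 : 2 ≤ l) (hlm : l < m)
    (η₀ : Fin p → ℝ)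
    (hsol : ∀ i : MonIdx m, monDeg i ≤ l → (PhiMat x 1).mulVec η₀ i = Yvec i)
    (r : ℝ) (hr : 0 < r)
    (ηr : Fin p → ℝ)
    (hmin : ∀ η : Fin p → ℝ,
      l2norm (fun i : MonIdx m => Yvec i -
          (Matrix.diagonal (fun j : MonIdx m => r ^ ((monDeg j : ℤ) - 2))).mulVec
            ((PhiMat x 1).mulVec ηr) i) ≤
        l2norm (fun i : MonIdx m => Yvec i -
          (Matrix.diagonal (fun j : MonIdx m => r ^ ((monDeg j : ℤ) - 2))).mulVec
            ((PhiMat x 1).mulVec η) i)) :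
    ∀ i : ℕ, 1 ≤ i → i ≤ l + 1 →
      r ^ (2 * ((i : ℤ) - 2)) *
          ∑ row ∈ Finset.univ.filter (fun row : MonIdx m => monDeg row = i),
            (Yvec row - (PhiMat x 1).mulVec ηr row) ^ 2 ≤
        ∑ j ∈ Finset.Icc (l + 1) m,
          r ^ (2 * ((j : ℤ) - 2)) *
            ∑ row ∈ Finset.univ.filter (fun row : MonIdx m => monDeg row = j),
              (Yvec row - (PhiMat x 1).mulVec η₀ row) ^ 2 :=
  stmt3_general x l hlm η₀ hsol r ηr hmin
end
end

section
/- Let s ≥ 0 be an integer, let x₁,…,x_p ∈ ℝ², and let η ∈ ℝ^p. Suppose that for every monomial φ(x,y) = x^a y^b with 1 ≤ a+b ≤ s+2 one has Σ_{k=1}^{p} η_k φ(x_k) = Δφ(0,0) (that is, the sum equals 2 when φ is x² or y², and 0 otherwise). Then for every function u : ℝ² → ℝ that is of class C^{s+2} on a neighborhood of the origin, Δu(0,0) − r^{−2} Σ_{k=1}^{p} η_k ( u(r x_k) − u(0,0) ) = o(r^{s}) as r → 0⁺, where Δ = ∂²/∂x² + ∂²/∂y². -/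
open Finset Asymptotics Topology Set Nat

theorem myIDW {n : ℕ∞} {f : ℝ → ℝ} {O s : Set ℝ} (hO : IsOpen O)
    (hf : ContDiffOn ℝ n f O) (hs : UniqueDiffOn ℝ s) (hsub : s ⊆ O)
    {i : ℕ} (hi : (i : ℕ∞) ≤ n) {t : ℝ} (ht : t ∈ s) :
    iteratedDerivWithin i f s t = iteratedDeriv i f t := by
  have h1 := (hf.ftaylorSeriesWithin hO.uniqueDiffOn).mono hsub
  have h2 := h1.eq_iteratedFDerivWithin_of_uniqueDiffOn (mod_cast hi) hs ht
  have h3 : ftaylorSeriesWithin ℝ f O t i = iteratedFDerivWithin ℝ i f O t := rfl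
  rw [iteratedDerivWithin, iteratedDeriv, ← h2, h3,
    iteratedFDerivWithin_of_isOpen i hO (hsub ht)]

theorem myComp {n : ℕ∞} {f : ℝ × ℝ → ℝ} {V : Set (ℝ × ℝ)} (hV : IsOpen V)
    (hf : ContDiffOn ℝ n f V) (L : ℝ →L[ℝ] ℝ × ℝ) {i : ℕ} (hi : (i : ℕ∞) ≤ n)
    {t : ℝ} (ht : L t ∈ V) :
    iteratedDeriv i (f ∘ L) t = iteratedFDeriv ℝ i f (L t) (fun _ => L 1) := by
  have hO : IsOpen (L ⁻¹' V) := hV.preimage L.continuous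
  have h := L.iteratedFDerivWithin_comp_right hf hV.uniqueDiffOn hO.uniqueDiffOn ht (mod_cast hi)
  rw [iteratedFDerivWithin_of_isOpen i hO ht, iteratedFDerivWithin_of_isOpen i hV ht] at h
  rw [iteratedDeriv, h]
  simp


theorem myKey (s : ℕ) {p : ℕ} (x : Fin p → ℝ × ℝ) (η : Fin p → ℝ)
    (hmom : ∀ a b : ℕ, 1 ≤ a + b → a + b ≤ s + 2 →
      ∑ k, η k * ((x k).1 ^ a * (x k).2 ^ b) =
        (if (a = 2 ∧ b = 0) ∨ (a = 0 ∧ b = 2) then (2 : ℝ) else 0))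
    (i : ℕ) (h1 : 1 ≤ i) (h2 : i ≤ s + 2)
    (f : ContinuousMultilinearMap ℝ (fun _ : Fin i => ℝ × ℝ) ℝ) :
    ∑ k, η k * f (fun _ => x k) =
      if i = 2 then
        2 * (f (fun _ => ((1 : ℝ), (0 : ℝ))) + f (fun _ => ((0 : ℝ), (1 : ℝ)))) else 0 := by
  classical
  set e : Fin 2 → ℝ × ℝ := fun j => if j = 0 then ((1:ℝ), (0:ℝ)) else ((0:ℝ), (1:ℝ)) with he
  set c : Fin p → Fin 2 → ℝ := fun k j => if j = 0 then (x k).1 else (x k).2 with hc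
  have hxk : ∀ k, (fun _ : Fin i => x k) = fun _ : Fin i => ∑ j : Fin 2, c k j • e j := by
    intro k
    funext i'
    simp [Fin.sum_univ_two, he, hc, Prod.ext_iff]
  have hexp : ∀ k, f (fun _ => x k) =
      ∑ m : Fin i → Fin 2, (∏ i', c k (m i')) * f (fun i' => e (m i')) := by
    intro k
    rw [hxk k, ← ContinuousMultilinearMap.coe_coe f]
    rw [f.toMultilinearMap.map_sum (fun _ j => c k j • e j)]
    congr 1
    funext m
    rw [f.toMultilinearMap.map_smul_univ (fun i' => c k (m i')) (fun i' => e (m i')),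
      smul_eq_mul]
  have hprod : ∀ (k) (m : Fin i → Fin 2),
      (∏ i', c k (m i')) =
        (x k).1 ^ #(univ.filter fun i' => m i' = 0) *
        (x k).2 ^ (i - #(univ.filter fun i' => m i' = 0)) := by
    intro k m
    rw [← Finset.prod_filter_mul_prod_filter_not univ (fun i' => m i' = 0)]
    congr 1
    · rw [Finset.prod_congr rfl (fun i' hi' => ?_), Finset.prod_const]
      simp only [mem_filter] at hi'
      simp [hc, hi'.2]
    · rw [Finset.prod_congr rfl (fun i' hi' => ?_), Finset.prod_const]
      · congr 1
        have := Finset.card_filter_add_card_filter_not (s := (univ : Finset (Fin i)))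
          (p := fun i' => m i' = 0)
        simp only [Finset.card_univ, Fintype.card_fin] at this
        omega
      · simp only [mem_filter] at hi'
        have hm1 : m i' = 1 := by omega
        simp [hc, hm1]
  calc ∑ k, η k * f (fun _ => x k)
      = ∑ m : Fin i → Fin 2, f (fun i' => e (m i')) *
          ∑ k, η k * ((x k).1 ^ #(univ.filter fun i' => m i' = 0) *
            (x k).2 ^ (i - #(univ.filter fun i' => m i' = 0))) := by
        simp_rw [hexp, Finset.mul_sum]
        rw [Finset.sum_comm]
        congr 1; funext m; congr 1; funext k
        rw [hprod k m]; ring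
    _ = ∑ m : Fin i → Fin 2, f (fun i' => e (m i')) *
          (if (#(univ.filter fun i' => m i' = 0) = 2 ∧ i - #(univ.filter fun i' => m i' = 0) = 0)
            ∨ (#(univ.filter fun i' => m i' = 0) = 0 ∧ i - #(univ.filter fun i' => m i' = 0) = 2)
            then (2:ℝ) else 0) := by
        refine Finset.sum_congr rfl fun m _ => ?_
        congr 1
        have hle : #(univ.filter fun i' => m i' = 0) ≤ i := by
          simpa using Finset.card_filter_le univ (fun i' => m i' = 0)
        exact hmom _ _ (by omega) (by omega)
    _ = _ := by
      by_cases hi2 : i = 2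
      · subst hi2
        rw [if_pos rfl]
        have hcard : ∀ m : Fin 2 → Fin 2,
            ((#(univ.filter fun i' => m i' = 0) = 2 ∧ 2 - #(univ.filter fun i' => m i' = 0) = 0)
            ∨ (#(univ.filter fun i' => m i' = 0) = 0 ∧ 2 - #(univ.filter fun i' => m i' = 0) = 2))
            ↔ (m = fun _ => 0) ∨ (m = fun _ => 1) := by
          intro m
          constructor
          · rintro (⟨h, -⟩ | ⟨h, -⟩)
            · left
              funext i'
              have huniv : (univ.filter fun i' => m i' = 0) = Finset.univ := by
                apply Finset.eq_univ_of_card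
                simpa using h
              have h4 := Finset.eq_univ_iff_forall.1 huniv i'
              simp only [Finset.mem_filter] at h4
              exact h4.2
            · right
              funext i'
              have hemp : (univ.filter fun i' => m i' = 0) = ∅ := Finset.card_eq_zero.1 h
              have h3 : i' ∉ (univ.filter fun i' => m i' = 0) := by simp [hemp]
              simp only [Finset.mem_filter, Finset.mem_univ, true_and] at h3
              omega
          · rintro (rfl | rfl) <;> simp
        have hsplit : ∀ m : Fin 2 → Fin 2,
            f (fun i' => e (m i')) *
              (if ((m = fun _ => 0) ∨ (m = fun _ => 1)) then (2:ℝ) else 0)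
            = (if m = (fun _ => 0) then f (fun i' => e (m i')) * 2 else 0)
              + (if m = (fun _ => 1) then f (fun i' => e (m i')) * 2 else 0) := by
          intro m
          by_cases h0 : m = fun _ => 0
          · have h1' : ¬ (m = fun _ => 1) := by
              subst h0; intro h; have := congrFun h 0; simp at this
            rw [if_pos (Or.inl h0), if_pos h0, if_neg h1', add_zero]
          · by_cases h1' : m = fun _ => 1
            · rw [if_pos (Or.inr h1'), if_neg h0, if_pos h1', zero_add]
            · rw [if_neg (by tauto), if_neg h0, if_neg h1', add_zero, mul_zero]
        calc ∑ m : Fin 2 → Fin 2, f (fun i' => e (m i')) *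
              (if (#(univ.filter fun i' => m i' = 0) = 2
                  ∧ 2 - #(univ.filter fun i' => m i' = 0) = 0)
              ∨ (#(univ.filter fun i' => m i' = 0) = 0
                  ∧ 2 - #(univ.filter fun i' => m i' = 0) = 2)
              then (2:ℝ) else 0)
            = ∑ m : Fin 2 → Fin 2,
              ((if m = (fun _ => 0) then f (fun i' => e (m i')) * 2 else 0)
              + (if m = (fun _ => 1) then f (fun i' => e (m i')) * 2 else 0)) := by
              refine Finset.sum_congr rfl fun m _ => ?_
              rw [if_congr (hcard m) rfl rfl, hsplit m]
          _ = 2 * (f (fun _ => ((1:ℝ), (0:ℝ))) + f (fun _ => ((0:ℝ), (1:ℝ)))) := by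
              rw [Finset.sum_add_distrib, Finset.sum_ite_eq' univ (fun _ => (0 : Fin 2)),
                Finset.sum_ite_eq' univ (fun _ => (1 : Fin 2))]
              simp only [Finset.mem_univ, if_pos, he]
              norm_num
              ring
      · rw [if_neg hi2]
        apply Finset.sum_eq_zero
        intro m _
        rw [if_neg, mul_zero]
        have hle : #(univ.filter fun i' => m i' = 0) ≤ i := by
          simpa using Finset.card_filter_le univ (fun i' => m i' = 0)
        rintro (⟨h, h3⟩ | ⟨h, h3⟩) <;> omega


theorem myTaylor (N : ℕ) {f : ℝ → ℝ} {O : Set ℝ} (hO : IsOpen O)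
    (hf : ContDiffOn ℝ ((N + 2 : ℕ) : ℕ∞) f O) {r : ℝ} (hr : 0 < r) (hsub : Icc 0 r ⊆ O) :
    ∃ ξ ∈ Ioo 0 r, f r - f 0 =
      (∑ i ∈ Ico 1 (N + 3), ((i ! : ℝ)⁻¹ * r ^ i) * iteratedDeriv i f 0)
        + (((N + 2)! : ℝ)⁻¹ * r ^ (N + 2)) *
          (iteratedDeriv (N + 2) f ξ - iteratedDeriv (N + 2) f 0) := by
  have hIcc : UniqueDiffOn ℝ (Icc (0:ℝ) r) := uniqueDiffOn_Icc hr
  have hIoosub : Ioo (0:ℝ) r ⊆ O := fun t ht => hsub (Ioo_subset_Icc_self ht)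
  have hfIcc : ContDiffOn ℝ (N + 1 : ℕ) f (Icc 0 r) :=
    (hf.of_le (by exact_mod_cast Nat.le_succ (N+1))).mono hsub
  have hEqIcc : ∀ i : ℕ, i ≤ N + 2 → ∀ t ∈ Icc (0:ℝ) r,
      iteratedDerivWithin i f (Icc 0 r) t = iteratedDeriv i f t := fun i hi t ht =>
    myIDW hO hf hIcc hsub (by exact_mod_cast hi) ht
  have hEqO : ∀ i : ℕ, i ≤ N + 2 → ∀ t ∈ O,
      iteratedDerivWithin i f O t = iteratedDeriv i f t := fun i hi t ht =>
    myIDW hO hf hO.uniqueDiffOn (le_refl O) (by exact_mod_cast hi) ht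
  have hdiffO : DifferentiableOn ℝ (iteratedDerivWithin (N + 1) f O) O :=
    hf.differentiableOn_iteratedDerivWithin (by exact_mod_cast Nat.lt_succ_self (N+1))
      hO.uniqueDiffOn
  have hf' : DifferentiableOn ℝ (iteratedDerivWithin (N + 1) f (Icc 0 r)) (Ioo 0 r) := by
    have h1 : DifferentiableOn ℝ (iteratedDeriv (N + 1) f) (Ioo 0 r) := by
      refine ((hdiffO.mono hIoosub).congr ?_)
      intro t ht
      exact (hEqO (N+1) (by omega) t (hIoosub ht)).symm
    refine h1.congr ?_
    intro t ht
    exact hEqIcc (N+1) (by omega) t (Ioo_subset_Icc_self ht)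
  obtain ⟨ξ, hξ, hT⟩ := taylor_mean_remainder_lagrange hr.ne
    (by rwa [Set.uIcc_of_le hr.le]) (by rwa [Set.uIcc_of_le hr.le, Set.uIoo_of_le hr.le])
  rw [Set.uIoo_of_le hr.le] at hξ
  rw [Set.uIcc_of_le hr.le] at hT
  refine ⟨ξ, hξ, ?_⟩
  rw [taylor_within_apply] at hT
  have hTsum : ∑ i ∈ Finset.range (N + 1 + 1), (((i ! : ℝ))⁻¹ * (r - 0) ^ i) •
      iteratedDerivWithin i f (Icc 0 r) 0 =
      f 0 + ∑ i ∈ Finset.Ico 1 (N + 2), ((i ! : ℝ)⁻¹ * r ^ i) * iteratedDeriv i f 0 := by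
    rw [Finset.range_eq_Ico, Finset.sum_eq_sum_Ico_succ_bot (by omega)]
    simp only [sub_zero, smul_eq_mul]
    congr 1
    · simp [hEqIcc 0 (by omega) 0 (Set.left_mem_Icc.2 hr.le)]
    · exact Finset.sum_congr rfl fun i hi => by
        rw [hEqIcc i (by simp at hi; omega) 0 (Set.left_mem_Icc.2 hr.le)]
  rw [hTsum] at hT
  have hrem : iteratedDerivWithin (N + 1 + 1) f (Icc 0 r) ξ = iteratedDeriv (N + 2) f ξ :=
    hEqIcc (N+2) le_rfl ξ (Ioo_subset_Icc_self hξ)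
  rw [hrem] at hT
  have hsplit : ∑ i ∈ Ico 1 (N + 3), ((i ! : ℝ)⁻¹ * r ^ i) * iteratedDeriv i f 0 =
      (∑ i ∈ Ico 1 (N + 2), ((i ! : ℝ)⁻¹ * r ^ i) * iteratedDeriv i f 0)
        + (((N + 2)! : ℝ)⁻¹ * r ^ (N + 2)) * iteratedDeriv (N + 2) f 0 := by
    rw [show N + 3 = (N + 2) + 1 from rfl, Finset.sum_Ico_succ_top (by omega)]
  have hfac : ((N + 1 + 1)! : ℝ) ≠ 0 := by exact_mod_cast (Nat.factorial_ne_zero _)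
  rw [hsplit]
  have : f r - (f 0 + ∑ i ∈ Ico 1 (N + 2), ((i !:ℝ))⁻¹ * r ^ i * iteratedDeriv i f 0)
      = iteratedDeriv (N + 2) f ξ * (r - 0) ^ (N + 1 + 1) / ((N + 1 + 1)! : ℝ) := hT
  have h22 : N + 1 + 1 = N + 2 := rfl
  rw [h22] at this
  rw [sub_zero] at this
  field_simp at this ⊢
  linarith [this]


/-- If the weights `η` reproduce the Laplacian at the origin on all monomials `x^a y^b` of
total degree between `1` and `s+2`, then for every function `u` of class `C^{s+2}` near the
origin, the finite-difference approximation of `Δu(0,0)` has error `o(rˢ)` as `r → 0⁺`. -/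
theorem stmt4 (s : ℕ) {p : ℕ} (x : Fin p → ℝ × ℝ) (η : Fin p → ℝ)
    (hmom : ∀ a b : ℕ, 1 ≤ a + b → a + b ≤ s + 2 →
      ∑ k, η k * ((x k).1 ^ a * (x k).2 ^ b) =
        (if (a = 2 ∧ b = 0) ∨ (a = 0 ∧ b = 2) then (2 : ℝ) else 0)) :
    ∀ u : ℝ × ℝ → ℝ, ContDiffAt ℝ ((s : ℕ∞) + 2) u 0 →
      (fun r : ℝ =>
          (deriv (deriv (fun a : ℝ => u (a, 0))) 0 +
            deriv (deriv (fun b : ℝ => u (0, b))) 0) -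
          r ^ (-2 : ℤ) * ∑ k, η k * (u (r • x k) - u 0))
        =o[𝓝[>] (0 : ℝ)] fun r => r ^ s := by
  intro u hu
  classical
  replace hu : ContDiffAt ℝ (((s + 2 : ℕ) : ℕ∞)) u 0 := by exact_mod_cast hu
  obtain ⟨t0, ht0, hCDt⟩ := hu.contDiffOn le_rfl
    (by rw [WithTop.coe_eq_coe]; exact fun h => absurd h (ENat.coe_ne_top _))
  obtain ⟨V, hVsub, hVopen, hV0⟩ := mem_nhds_iff.1 ht0
  have hCD : ContDiffOn ℝ ((s + 2 : ℕ) : ℕ∞) u V := hCDt.mono hVsub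
  set L : Fin p → (ℝ →L[ℝ] ℝ × ℝ) := fun k => (ContinuousLinearMap.id ℝ ℝ).smulRight (x k)
    with hLdef
  have hLapp : ∀ k (r : ℝ), L k r = r • x k := by intro k r; simp [hLdef]
  have hL0 : ∀ k, L k (0:ℝ) = 0 := by intro k; simp [hLapp]
  have hL1 : ∀ k, L k (1:ℝ) = x k := by intro k; simp [hLapp]
  set L1 : ℝ →L[ℝ] ℝ × ℝ := (ContinuousLinearMap.id ℝ ℝ).smulRight ((1:ℝ), (0:ℝ)) with hL1def
  set L2 : ℝ →L[ℝ] ℝ × ℝ := (ContinuousLinearMap.id ℝ ℝ).smulRight ((0:ℝ), (1:ℝ)) with hL2def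
  have hL1app : ∀ a : ℝ, L1 a = (a, 0) := by
    intro a; simp [hL1def, Prod.ext_iff]
  have hL2app : ∀ b : ℝ, L2 b = (0, b) := by
    intro b; simp [hL2def, Prod.ext_iff]
  have hcast : ∀ i : ℕ, i ≤ s + 2 → ((i : ℕ∞) ≤ ((s + 2 : ℕ) : ℕ∞)) :=
    fun i hi => by exact_mod_cast hi
  have h2le : ((2:ℕ) : ℕ∞) ≤ ((s + 2 : ℕ) : ℕ∞) := hcast 2 (by omega)
  have hd1 : deriv (deriv (fun a : ℝ => u (a, 0))) 0 =
      iteratedFDeriv ℝ 2 u 0 (fun _ => ((1:ℝ), (0:ℝ))) := by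
    have he : (fun a : ℝ => u (a, 0)) = u ∘ L1 := by funext a; simp [hL1app]
    have h2 : deriv (deriv (u ∘ L1)) 0 = iteratedDeriv 2 (u ∘ L1) 0 := by
      rw [show (2:ℕ) = 1 + 1 from rfl, iteratedDeriv_succ, iteratedDeriv_one]
    have h0V : L1 (0:ℝ) ∈ V := by rw [show L1 (0:ℝ) = 0 by simp [hL1app, Prod.ext_iff]]; exact hV0
    rw [he, h2, myComp hVopen hCD L1 h2le h0V]
    rw [show L1 (0:ℝ) = 0 by simp [hL1app, Prod.ext_iff]]
    simp [hL1app]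
  have hd2 : deriv (deriv (fun b : ℝ => u (0, b))) 0 =
      iteratedFDeriv ℝ 2 u 0 (fun _ => ((0:ℝ), (1:ℝ))) := by
    have he : (fun b : ℝ => u (0, b)) = u ∘ L2 := by funext b; simp [hL2app]
    have h2 : deriv (deriv (u ∘ L2)) 0 = iteratedDeriv 2 (u ∘ L2) 0 := by
      rw [show (2:ℕ) = 1 + 1 from rfl, iteratedDeriv_succ, iteratedDeriv_one]
    have h0V : L2 (0:ℝ) ∈ V := by rw [show L2 (0:ℝ) = 0 by simp [hL2app, Prod.ext_iff]]; exact hV0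
    rw [he, h2, myComp hVopen hCD L2 h2le h0V]
    rw [show L2 (0:ℝ) = 0 by simp [hL2app, Prod.ext_iff]]
    simp [hL2app]
  set Δ : ℝ := iteratedFDeriv ℝ 2 u 0 (fun _ => ((1:ℝ), (0:ℝ))) +
      iteratedFDeriv ℝ 2 u 0 (fun _ => ((0:ℝ), (1:ℝ))) with hΔdef
  -- derivatives of u ∘ L k at 0
  have hdik : ∀ i : ℕ, i ≤ s + 2 → ∀ k, iteratedDeriv i (u ∘ L k) 0
      = iteratedFDeriv ℝ i u 0 (fun _ => x k) := by
    intro i hi k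
    have h0V : L k (0:ℝ) ∈ V := by rw [hL0 k]; exact hV0
    rw [myComp hVopen hCD (L k) (hcast i hi) h0V, hL0 k]
    simp [hL1 k]
  have hM : ∀ i : ℕ, 1 ≤ i → i ≤ s + 2 →
      ∑ k, η k * iteratedDeriv i (u ∘ L k) 0 = if i = 2 then 2 * Δ else 0 := by
    intro i h1 h2
    rw [Finset.sum_congr rfl fun k _ => by rw [hdik i h2 k]]
    rw [myKey s x η hmom i h1 h2 (iteratedFDeriv ℝ i u 0)]
    split_ifs with h
    · subst h; rw [hΔdef]
    · rfl
  -- neighborhood where everything is defined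
  have hWopen : IsOpen (⋂ k, (L k) ⁻¹' V) :=
    isOpen_iInter_of_finite fun k => hVopen.preimage (L k).continuous
  have hW0 : (0:ℝ) ∈ ⋂ k, (L k) ⁻¹' V := mem_iInter.2 fun k => by
    rw [Set.mem_preimage, hL0 k]; exact hV0
  obtain ⟨δ, hδpos, hδ⟩ := Metric.isOpen_iff.1 hWopen 0 hW0
  set G : Fin p → ℝ → ℝ := fun k => iteratedDeriv (s + 2) (u ∘ L k) with hGdef
  have hOk : ∀ k, IsOpen ((L k) ⁻¹' V) := fun k => hVopen.preimage (L k).continuous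
  have h0k : ∀ k, (0:ℝ) ∈ (L k) ⁻¹' V := fun k => by
    rw [Set.mem_preimage, hL0 k]; exact hV0
  have hgk : ∀ k, ContDiffOn ℝ ((s + 2 : ℕ) : ℕ∞) (u ∘ L k) ((L k) ⁻¹' V) := fun k =>
    hCD.comp_continuousLinearMap (L k)
  have hs2le : ((s + 2 : ℕ) : ℕ∞) ≤ ((s + 2 : ℕ) : ℕ∞) := le_rfl
  have hGc : ∀ k, ContinuousAt (G k) 0 := by
    intro k
    have hco : ContinuousOn (iteratedDerivWithin (s+2) (u ∘ L k) ((L k) ⁻¹' V)) ((L k) ⁻¹' V) :=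
      (hgk k).continuousOn_iteratedDerivWithin (by exact_mod_cast le_rfl) (hOk k).uniqueDiffOn
    have heq : Set.EqOn (iteratedDerivWithin (s+2) (u ∘ L k) ((L k) ⁻¹' V)) (G k)
        ((L k) ⁻¹' V) := fun t ht =>
      myIDW (hOk k) (hgk k) (hOk k).uniqueDiffOn (le_refl _) hs2le ht
    exact ((hco.congr heq.symm).continuousAt ((hOk k).mem_nhds (h0k k)))
  rw [isLittleO_iff]
  intro c hc
  set C : ℝ := ∑ k, |η k| with hCdef
  have hC0 : 0 ≤ C := Finset.sum_nonneg fun k _ => abs_nonneg _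
  have hfacpos : (0:ℝ) < ((s+2)! : ℝ) := by exact_mod_cast (s+2).factorial_pos
  set c' : ℝ := c * ((s+2)! : ℝ) / (C + 1) with hc'def
  have hc'pos : 0 < c' := by
    apply div_pos (mul_pos hc hfacpos); linarith
  have hev : ∀ᶠ t : ℝ in 𝓝 0, ∀ k, dist (G k t) (G k 0) < c' :=
    Filter.eventually_all.2 fun k => Metric.tendsto_nhds.1 (hGc k) c' hc'pos
  obtain ⟨δ', hδ'pos, hδ'⟩ := Metric.eventually_nhds_iff.1 hev
  have hmem : Set.Ioo (0:ℝ) (min δ δ') ∈ 𝓝[>] (0:ℝ) :=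
    Ioo_mem_nhdsGT_of_mem ⟨le_refl 0, lt_min hδpos hδ'pos⟩
  filter_upwards [hmem] with r hr
  obtain ⟨hr0, hrlt⟩ := hr
  have hrne : r ≠ 0 := ne_of_gt hr0
  have hrδ : r < δ := lt_of_lt_of_le hrlt (min_le_left _ _)
  have hrδ' : r < δ' := lt_of_lt_of_le hrlt (min_le_right _ _)
  have hIccsub : ∀ k, Set.Icc (0:ℝ) r ⊆ (L k) ⁻¹' V := by
    intro k t ht
    have habs : |t| < δ := by
      rw [abs_of_nonneg ht.1]; exact lt_of_le_of_lt ht.2 hrδ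
    have : t ∈ ⋂ k, (L k) ⁻¹' V := by
      apply hδ
      rw [Metric.mem_ball, Real.dist_eq, sub_zero]; exact habs
    exact mem_iInter.1 this k
  have hTk : ∀ k, ∃ ξ ∈ Set.Ioo (0:ℝ) r, (u ∘ L k) r - (u ∘ L k) 0 =
      (∑ i ∈ Ico 1 (s+3), ((i ! : ℝ)⁻¹ * r ^ i) * iteratedDeriv i (u ∘ L k) 0)
        + (((s+2)! : ℝ)⁻¹ * r ^ (s+2)) * (G k ξ - G k 0) := fun k =>
    myTaylor s (hOk k) (hgk k) hr0 (hIccsub k)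
  choose ξ hξmem hξeq using hTk
  set E : ℝ := ∑ k, η k * (G k (ξ k) - G k 0) with hEdef
  have hS : ∑ k, η k * (u (r • x k) - u 0) =
      r ^ 2 * Δ + (((s+2)! : ℝ)⁻¹ * r ^ (s+2)) * E := by
    have h1 : ∀ k, u (r • x k) - u 0 = (u ∘ L k) r - (u ∘ L k) 0 := by
      intro k; simp [hLapp, hL0]
    calc ∑ k, η k * (u (r • x k) - u 0)
        = ∑ k, η k * ((∑ i ∈ Ico 1 (s+3), ((i ! : ℝ)⁻¹ * r ^ i) * iteratedDeriv i (u ∘ L k) 0)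
            + (((s+2)! : ℝ)⁻¹ * r ^ (s+2)) * (G k (ξ k) - G k 0)) := by
          refine Finset.sum_congr rfl fun k _ => ?_
          rw [h1 k, hξeq k]
      _ = (∑ i ∈ Ico 1 (s+3), ((i ! : ℝ)⁻¹ * r ^ i) *
            ∑ k, η k * iteratedDeriv i (u ∘ L k) 0)
            + (((s+2)! : ℝ)⁻¹ * r ^ (s+2)) * E := by
          rw [hEdef]
          simp_rw [mul_add, Finset.sum_add_distrib, Finset.mul_sum]
          congr 1
          · rw [Finset.sum_comm]
            exact Finset.sum_congr rfl fun i _ => Finset.sum_congr rfl fun k _ => by ring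
          · exact Finset.sum_congr rfl fun k _ => by ring
      _ = (∑ i ∈ Ico 1 (s+3), if i = 2 then ((i ! : ℝ)⁻¹ * r ^ i) * (2 * Δ) else 0)
            + (((s+2)! : ℝ)⁻¹ * r ^ (s+2)) * E := by
          congr 1
          refine Finset.sum_congr rfl fun i hi => ?_
          simp only [Finset.mem_Ico] at hi
          rw [hM i hi.1 (by omega)]
          split_ifs
          · rfl
          · rw [mul_zero]
      _ = r ^ 2 * Δ + (((s+2)! : ℝ)⁻¹ * r ^ (s+2)) * E := by
          rw [Finset.sum_ite_eq' (Ico 1 (s+3)) 2 (fun i => ((i ! : ℝ)⁻¹ * r ^ i) * (2 * Δ))]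
          rw [if_pos (by simp only [Finset.mem_Ico]; omega)]
          have h2f : ((2! : ℕ) : ℝ) = 2 := by norm_num [Nat.factorial]
          rw [h2f]; ring
  have hzpow : (r : ℝ) ^ (-2 : ℤ) = (r ^ 2)⁻¹ := by
    rw [show (-2 : ℤ) = -((2:ℕ) : ℤ) by norm_num, zpow_neg, zpow_natCast]
  have hkey : (deriv (deriv (fun a : ℝ => u (a, 0))) 0 +
      deriv (deriv (fun b : ℝ => u (0, b))) 0) -
      r ^ (-2 : ℤ) * ∑ k, η k * (u (r • x k) - u 0)
      = -(((s+2)! : ℝ)⁻¹ * r ^ s) * E := by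
    rw [hd1, hd2, hS, hzpow, ← hΔdef]
    have hrsplit : r ^ (s + 2) = r ^ s * r ^ 2 := by ring
    rw [hrsplit]
    field_simp
    ring
  rw [hkey]
  have hEbound : |E| ≤ C * c' := by
    rw [hEdef]
    calc |∑ k, η k * (G k (ξ k) - G k 0)| ≤ ∑ k, |η k * (G k (ξ k) - G k 0)| :=
          Finset.abs_sum_le_sum_abs _ _
      _ ≤ ∑ k, |η k| * c' := by
          refine Finset.sum_le_sum fun k _ => ?_
          rw [abs_mul]
          refine mul_le_mul_of_nonneg_left ?_ (abs_nonneg _)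
          have hd : dist (ξ k) 0 < δ' := by
            rw [Real.dist_eq, sub_zero, abs_of_nonneg (hξmem k).1.le]
            exact lt_trans (hξmem k).2 hrδ'
          have := hδ' hd k
          rw [Real.dist_eq] at this
          exact this.le
      _ = C * c' := by rw [hCdef, ← Finset.sum_mul]
  have hnorm : ‖-(((s+2)! : ℝ)⁻¹ * r ^ s) * E‖ = ((s+2)! : ℝ)⁻¹ * r ^ s * |E| := by
    rw [norm_mul, norm_neg, Real.norm_eq_abs, Real.norm_eq_abs,
      abs_of_nonneg (by positivity : (0:ℝ) ≤ ((s+2)! : ℝ)⁻¹ * r ^ s)]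
  rw [hnorm, Real.norm_eq_abs, abs_of_nonneg (by positivity : (0:ℝ) ≤ r ^ s)]
  calc ((s+2)! : ℝ)⁻¹ * r ^ s * |E| ≤ ((s+2)! : ℝ)⁻¹ * r ^ s * (C * c') := by
        refine mul_le_mul_of_nonneg_left hEbound (by positivity)
    _ ≤ c * r ^ s := by
        rw [hc'def]
        rw [div_eq_mul_inv]
        have h1 : ((s+2)! : ℝ)⁻¹ * r ^ s * (C * (c * ((s+2)! : ℝ) * (C + 1)⁻¹))
            = c * r ^ s * (C / (C + 1)) := by
          field_simp
        rw [h1]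
        have h2 : C / (C + 1) ≤ 1 := by
          rw [div_le_one (by linarith)]; linarith
        calc c * r ^ s * (C / (C + 1)) ≤ c * r ^ s * 1 := by
              refine mul_le_mul_of_nonneg_left h2 (by positivity)
          _ = c * r ^ s := by ring
end

section
/- Let s ≥ 0 be an integer, let x₁,…,x_p ∈ ℝ², let η ∈ ℝ^p, and let φ(x,y) = x^a y^b be a monomial of total degree j = a + b with 1 ≤ j ≤ s+2. If Δφ(0,0) − r^{−2} Σ_{k=1}^{p} η_k ( φ(r x_k) − φ(0,0) ) = o(r^{s}) as r → 0⁺, then Σ_{k=1}^{p} η_k φ(x_k) = Δφ(0,0) (equal to 2 if φ is x² or y², and to 0 otherwise). -/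
/-!
The monomial is homogeneous of degree `j = a + b`, so the error term equals
`Δφ(0,0) - r^(j-2) ∑ₖ ηₖ φ(xₖ)`. For `j = 2` it is constant and must vanish;
for `j ≠ 2` we have `Δφ(0,0) = 0` and `r^(j-2)` is not `o(rˢ)` since `j - 2 ≤ s`.
-/

open Finset Asymptotics Topology Filter

lemma eq_zero_of_mul_zpow_isLittleO_zpow {c : ℝ} {m s : ℤ} (hm : m ≤ s)
    (h : (fun r : ℝ => c * r ^ m) =o[𝓝[>] 0] fun r => r ^ s) : c = 0 := by
  by_contra hc
  have hsm : (fun r : ℝ => r ^ s) =O[𝓝[>] 0] fun r => r ^ m := by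
    refine IsBigO.of_bound 1 ?_
    filter_upwards [eventually_mem_nhdsWithin,
      nhdsWithin_le_nhds (eventually_lt_nhds one_pos)] with r (hr : 0 < r) hr1
    rw [one_mul, Real.norm_of_nonneg (zpow_pos hr s).le, Real.norm_of_nonneg (zpow_pos hr m).le]
    exact zpow_le_zpow_right_of_le_one₀ hr hr1.le hm
  have hself : (fun r : ℝ => r ^ m) =o[𝓝[>] 0] fun r => r ^ m :=
    (isLittleO_const_mul_left_iff' (Ne.isUnit hc)).mp (h.trans_isBigO hsm)
  refine isLittleO_irrefl (Eventually.frequently ?_) hself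
  filter_upwards [eventually_mem_nhdsWithin] with r (hr : 0 < r)
  exact (zpow_pos hr m).ne'

lemma sum_mul_scaled_monomial {ι R : Type*} [CommSemiring R] (t : Finset ι) (η : ι → R)
    (x : ι → R × R) (r : R) (a b : ℕ) :
    ∑ k ∈ t, η k * ((r * (x k).1) ^ a * (r * (x k).2) ^ b) =
      r ^ (a + b) * ∑ k ∈ t, η k * ((x k).1 ^ a * (x k).2 ^ b) := by
  rw [mul_sum]
  exact sum_congr rfl fun k _ => by ring

/-- Converse direction for a single monomial: if the finite-difference approximation with
weights `η` of the Laplacian at the origin applied to the monomial `φ(x,y) = x^a y^b`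
(of total degree `1 ≤ a + b ≤ s + 2`) has error `o(rˢ)` as `r → 0⁺`, then the weights
reproduce `Δφ(0,0)` exactly: `∑ₖ ηₖ φ(xₖ) = Δφ(0,0)` (which is `2` if `φ` is `x²` or `y²`,
and `0` otherwise). -/
theorem stmt5 (s : ℕ) {p : ℕ} (x : Fin p → ℝ × ℝ) (η : Fin p → ℝ)
    (a b : ℕ) (h1 : 1 ≤ a + b) (h2 : a + b ≤ s + 2)
    (h : (fun r : ℝ =>
        (if (a = 2 ∧ b = 0) ∨ (a = 0 ∧ b = 2) then (2 : ℝ) else 0) -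
          r ^ (-2 : ℤ) *
            ∑ k, η k * ((r * (x k).1) ^ a * (r * (x k).2) ^ b - (0 : ℝ) ^ a * (0 : ℝ) ^ b))
        =o[𝓝[>] (0 : ℝ)] fun r => r ^ s) :
    ∑ k, η k * ((x k).1 ^ a * (x k).2 ^ b) =
      (if (a = 2 ∧ b = 0) ∨ (a = 0 ∧ b = 2) then (2 : ℝ) else 0) := by
  set C : ℝ := if (a = 2 ∧ b = 0) ∨ (a = 0 ∧ b = 2) then (2 : ℝ) else 0
  set S : ℝ := ∑ k, η k * ((x k).1 ^ a * (x k).2 ^ b)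
  have hφ0 : (0 : ℝ) ^ a * (0 : ℝ) ^ b = 0 := by rw [← pow_add, zero_pow (by omega)]
  have herr : (fun r : ℝ => C - r ^ ((a + b : ℕ) - 2 : ℤ) * S) =o[𝓝[>] 0]
      fun r => r ^ (s : ℤ) := by
    refine h.congr' ?_ (.of_eq (by simp only [zpow_natCast]))
    filter_upwards [eventually_mem_nhdsWithin] with r (hr : 0 < r)
    simp only [hφ0, sub_zero]
    rw [sum_mul_scaled_monomial, ← mul_assoc, ← zpow_natCast, ← zpow_add₀ hr.ne', neg_add_eq_sub]
  by_cases hj : a + b = 2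
  · have hCS := eq_zero_of_mul_zpow_isLittleO_zpow (c := C - S) (m := 0) (by positivity)
      (herr.congr' (.of_eq (by simp [hj])) .rfl)
    linarith
  · have hC0 : C = 0 := if_neg (by omega)
    have hS := eq_zero_of_mul_zpow_isLittleO_zpow (c := -S)
      (m := ((a + b : ℕ) - 2 : ℤ)) (by omega) (herr.congr' (.of_eq (by ext; rw [hC0]; ring)) .rfl)
    linarith
end

section
/- Let R > 0 and define u, v : ℝ² × ℝ → ℝ by u(x,y,t) = 3/4 − 1/(4(1 + exp((−t − 4x + 4y)R/32))) and v(x,y,t) = 3/4 + 1/(4(1 + exp((−t − 4x + 4y)R/32))). Then at every point (x,y,t) the pair (u,v) satisfies the two-dimensional viscous Burgers system: ∂u/∂t + u·∂u/∂x + v·∂u/∂y = (1/R)(∂²u/∂x² + ∂²u/∂y²) and ∂v/∂t + u·∂v/∂x + v·∂v/∂y = (1/R)(∂²v/∂x² + ∂²v/∂y²). -/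
private lemma expAux (a b s : ℝ) :
    HasDerivAt (fun s => Real.exp (a * s + b)) (a * Real.exp (a * s + b)) s := by
  have h : HasDerivAt (fun s : ℝ => a * s + b) a s := by
    simpa using ((hasDerivAt_id s).const_mul a).add_const b
  simpa [mul_comm] using h.exp

private lemma key1 (a b s : ℝ) :
    HasDerivAt (fun s => 1 / (4 * (1 + Real.exp (a * s + b))))
      (-(a * Real.exp (a * s + b)) / (4 * (1 + Real.exp (a * s + b)) ^ 2)) s := by
  have hE := expAux a b s
  have hD : HasDerivAt (fun s => 4 * (1 + Real.exp (a * s + b)))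
      (4 * (a * Real.exp (a * s + b))) s := by
    simpa using (hE.const_add 1).const_mul 4
  have hne : 4 * (1 + Real.exp (a * s + b)) ≠ 0 := by positivity
  have h := hD.fun_inv hne
  have hfun : (fun s => 1 / (4 * (1 + Real.exp (a * s + b))))
      = fun s => (4 * (1 + Real.exp (a * s + b)))⁻¹ := by
    funext s; rw [one_div]
  rw [hfun]
  refine h.congr_deriv ?_
  have hne1 : (1 : ℝ) + Real.exp (a * s + b) ≠ 0 := by positivity
  field_simp

private lemma key2 (a b s : ℝ) :
    HasDerivAt (fun s => -(a * Real.exp (a * s + b)) / (4 * (1 + Real.exp (a * s + b)) ^ 2))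
      (a ^ 2 * Real.exp (a * s + b) * (Real.exp (a * s + b) - 1)
        / (4 * (1 + Real.exp (a * s + b)) ^ 3)) s := by
  have hE := expAux a b s
  have hN : HasDerivAt (fun s => -(a * Real.exp (a * s + b)))
      (-(a * (a * Real.exp (a * s + b)))) s := by
    simpa [mul_comm, mul_left_comm, mul_assoc] using (hE.const_mul a).fun_neg
  have hD : HasDerivAt (fun s => 4 * (1 + Real.exp (a * s + b)) ^ 2)
      (4 * (2 * (1 + Real.exp (a * s + b)) * (a * Real.exp (a * s + b)))) s := by
    have h := ((hE.const_add 1).fun_pow 2).const_mul 4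
    refine h.congr_deriv ?_
    push_cast
    ring
  have hne : 4 * (1 + Real.exp (a * s + b)) ^ 2 ≠ 0 := by positivity
  have h := hN.fun_div hD hne
  refine h.congr_deriv ?_
  have hne1 : (1 : ℝ) + Real.exp (a * s + b) ≠ 0 := by positivity
  field_simp
  ring

private lemma du1 (a b s : ℝ) :
    deriv (fun s => 3 / 4 - 1 / (4 * (1 + Real.exp (a * s + b)))) s
      = a * Real.exp (a * s + b) / (4 * (1 + Real.exp (a * s + b)) ^ 2) := by
  rw [((key1 a b s).const_sub (3 / 4)).deriv]
  ring

private lemma du2 (a b x : ℝ) :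
    deriv (deriv (fun s => 3 / 4 - 1 / (4 * (1 + Real.exp (a * s + b))))) x
      = -(a ^ 2 * Real.exp (a * x + b) * (Real.exp (a * x + b) - 1)
          / (4 * (1 + Real.exp (a * x + b)) ^ 3)) := by
  have hdf : deriv (fun s => 3 / 4 - 1 / (4 * (1 + Real.exp (a * s + b))))
      = fun s => -(-(a * Real.exp (a * s + b)) / (4 * (1 + Real.exp (a * s + b)) ^ 2)) := by
    funext s; exact ((key1 a b s).const_sub (3 / 4)).deriv
  rw [hdf, ((key2 a b x).fun_neg).deriv]

private lemma dv1 (a b s : ℝ) :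
    deriv (fun s => 3 / 4 + 1 / (4 * (1 + Real.exp (a * s + b)))) s
      = -(a * Real.exp (a * s + b)) / (4 * (1 + Real.exp (a * s + b)) ^ 2) := by
  rw [((key1 a b s).const_add (3 / 4)).deriv]

private lemma dv2 (a b x : ℝ) :
    deriv (deriv (fun s => 3 / 4 + 1 / (4 * (1 + Real.exp (a * s + b))))) x
      = a ^ 2 * Real.exp (a * x + b) * (Real.exp (a * x + b) - 1)
          / (4 * (1 + Real.exp (a * x + b)) ^ 3) := by
  have hdf : deriv (fun s => 3 / 4 + 1 / (4 * (1 + Real.exp (a * s + b))))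
      = fun s => -(a * Real.exp (a * s + b)) / (4 * (1 + Real.exp (a * s + b)) ^ 2) := by
    funext s; exact ((key1 a b s).const_add (3 / 4)).deriv
  rw [hdf, (key2 a b x).deriv]

/-- The pair `u(x,y,t) = 3/4 − 1/(4(1 + exp((−t−4x+4y)R/32)))`,
`v(x,y,t) = 3/4 + 1/(4(1 + exp((−t−4x+4y)R/32)))` is an exact solution of the
two-dimensional viscous Burgers system with Reynolds number `R > 0`. -/
theorem stmt10 (R : ℝ) (hR : 0 < R) (u v : ℝ → ℝ → ℝ → ℝ)
    (hu : ∀ x y t : ℝ, u x y t =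
      3 / 4 - 1 / (4 * (1 + Real.exp ((-t - 4 * x + 4 * y) * R / 32))))
    (hv : ∀ x y t : ℝ, v x y t =
      3 / 4 + 1 / (4 * (1 + Real.exp ((-t - 4 * x + 4 * y) * R / 32)))) :
    ∀ x y t : ℝ,
      (deriv (fun t' => u x y t') t +
          u x y t * deriv (fun x' => u x' y t) x +
          v x y t * deriv (fun y' => u x y' t) y =
        (1 / R) *
          (deriv (deriv (fun x' => u x' y t)) x + deriv (deriv (fun y' => u x y' t)) y)) ∧
      (deriv (fun t' => v x y t') t +
          u x y t * deriv (fun x' => v x' y t) x +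
          v x y t * deriv (fun y' => v x y' t) y =
        (1 / R) *
          (deriv (deriv (fun x' => v x' y t)) x + deriv (deriv (fun y' => v x y' t)) y)) := by
  intro x y t
  -- abbreviations for the linear coefficients in each direction
  have haX : (-(R / 8)) * x + (4 * y - t) * R / 32 = (-t - 4 * x + 4 * y) * R / 32 := by ring
  have haY : (R / 8) * y + (-t - 4 * x) * R / 32 = (-t - 4 * x + 4 * y) * R / 32 := by ring
  have haT : (-(R / 32)) * t + (4 * y - 4 * x) * R / 32 = (-t - 4 * x + 4 * y) * R / 32 := by
    ring
  -- function rewrites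
  have hufx : (fun x' => u x' y t)
      = fun x' => 3 / 4 - 1 / (4 * (1 + Real.exp ((-(R / 8)) * x' + (4 * y - t) * R / 32))) := by
    funext x'
    rw [hu, show (-t - 4 * x' + 4 * y) * R / 32
        = (-(R / 8)) * x' + (4 * y - t) * R / 32 from by ring]
  have hufy : (fun y' => u x y' t)
      = fun y' => 3 / 4 - 1 / (4 * (1 + Real.exp ((R / 8) * y' + (-t - 4 * x) * R / 32))) := by
    funext y'
    rw [hu, show (-t - 4 * x + 4 * y') * R / 32
        = (R / 8) * y' + (-t - 4 * x) * R / 32 from by ring]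
  have huft : (fun t' => u x y t')
      = fun t' => 3 / 4 - 1 / (4 * (1 + Real.exp ((-(R / 32)) * t' + (4 * y - 4 * x) * R / 32))) := by
    funext t'
    rw [hu, show (-t' - 4 * x + 4 * y) * R / 32
        = (-(R / 32)) * t' + (4 * y - 4 * x) * R / 32 from by ring]
  have hvfx : (fun x' => v x' y t)
      = fun x' => 3 / 4 + 1 / (4 * (1 + Real.exp ((-(R / 8)) * x' + (4 * y - t) * R / 32))) := by
    funext x'
    rw [hv, show (-t - 4 * x' + 4 * y) * R / 32
        = (-(R / 8)) * x' + (4 * y - t) * R / 32 from by ring]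
  have hvfy : (fun y' => v x y' t)
      = fun y' => 3 / 4 + 1 / (4 * (1 + Real.exp ((R / 8) * y' + (-t - 4 * x) * R / 32))) := by
    funext y'
    rw [hv, show (-t - 4 * x + 4 * y') * R / 32
        = (R / 8) * y' + (-t - 4 * x) * R / 32 from by ring]
  have hvft : (fun t' => v x y t')
      = fun t' => 3 / 4 + 1 / (4 * (1 + Real.exp ((-(R / 32)) * t' + (4 * y - 4 * x) * R / 32))) := by
    funext t'
    rw [hv, show (-t' - 4 * x + 4 * y) * R / 32
        = (-(R / 32)) * t' + (4 * y - 4 * x) * R / 32 from by ring]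
  set X := Real.exp ((-t - 4 * x + 4 * y) * R / 32) with hXdef
  have hX : 0 < X := Real.exp_pos _
  have hDX : (1 : ℝ) + X ≠ 0 := by positivity
  have h1 : deriv (fun x' => u x' y t) x = (-(R / 8)) * X / (4 * (1 + X) ^ 2) := by
    rw [hufx, du1, haX]
  have h2 : deriv (deriv (fun x' => u x' y t)) x
      = -((-(R / 8)) ^ 2 * X * (X - 1) / (4 * (1 + X) ^ 3)) := by
    rw [hufx, du2, haX]
  have h3 : deriv (fun y' => u x y' t) y = (R / 8) * X / (4 * (1 + X) ^ 2) := by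
    rw [hufy, du1, haY]
  have h4 : deriv (deriv (fun y' => u x y' t)) y
      = -((R / 8) ^ 2 * X * (X - 1) / (4 * (1 + X) ^ 3)) := by
    rw [hufy, du2, haY]
  have h5 : deriv (fun t' => u x y t') t = (-(R / 32)) * X / (4 * (1 + X) ^ 2) := by
    rw [huft, du1, haT]
  have h6 : deriv (fun x' => v x' y t) x = -((-(R / 8)) * X) / (4 * (1 + X) ^ 2) := by
    rw [hvfx, dv1, haX]
  have h7 : deriv (deriv (fun x' => v x' y t)) x
      = (-(R / 8)) ^ 2 * X * (X - 1) / (4 * (1 + X) ^ 3) := by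
    rw [hvfx, dv2, haX]
  have h8 : deriv (fun y' => v x y' t) y = -((R / 8) * X) / (4 * (1 + X) ^ 2) := by
    rw [hvfy, dv1, haY]
  have h9 : deriv (deriv (fun y' => v x y' t)) y
      = (R / 8) ^ 2 * X * (X - 1) / (4 * (1 + X) ^ 3) := by
    rw [hvfy, dv2, haY]
  have h10 : deriv (fun t' => v x y t') t = -((-(R / 32)) * X) / (4 * (1 + X) ^ 2) := by
    rw [hvft, dv1, haT]
  rw [hu x y t, hv x y t, ← hXdef] at *
  constructor
  · rw [h1, h2, h3, h4, h5]
    field_simp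
    ring
  · rw [h6, h7, h8, h9, h10]
    field_simp
    ring
end
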